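/- Let G be a connected acyclic simple graph in which every vertex has countably infinite degree (the neighbor set of every vertex is countably infinite). Then the automorphism group of G acts transitively on the vertices: for any vertices a and b there is a graph automorphism f of G with f a = b. -/

import Mathlib

/-!
Root the tree at a vertex `r`. Every vertex `v ≠ r` has exactly one neighbour closer to `r`, and
all its other neighbours are one step farther away; so every vertex has countably infinitely many
children. Choosing a bijection between `ℕ` and the children of each vertex identifies `G` with the
tree of finite lists of naturals, `r` going to `[]`. An automorphism moving `a` to `b` is obtained
by composing the identification rooted at `a`, inverted, with the one rooted at `b`.
-/

namespace SimpleGraph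

variable {V α : Type*}

/-- The rooted tree in which the children of `s` are the lists `a :: s`. -/
def listTree (α : Type*) : SimpleGraph (List α) :=
  fromRel fun s t => ∃ a, t = a :: s

def childSet (G : SimpleGraph V) (r v : V) : Set V :=
  {u | G.Adj v u ∧ G.dist r u = G.dist r v + 1}

variable {G : SimpleGraph V} {r u v : V}

lemma Walk.dist_le_length_of_mem_support {x : V} (p : G.Walk u v) (hx : x ∈ p.support) :
    G.dist u x ≤ p.length := by
  classical
  exact (dist_le _).trans (p.length_takeUntil_le_length hx)

lemma Connected.exists_mem_childSet (hG : G.Connected) (hv : v ≠ r) :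
    ∃ u, v ∈ G.childSet r u := by
  obtain ⟨p, hp⟩ := hG.exists_walk_length_eq_dist v r
  cases p with
  | nil => exact (hv rfl).elim
  | cons h q =>
    refine ⟨_, h.symm, ?_⟩
    have hq := dist_le q
    rw [Walk.length_cons] at hp
    rw [dist_comm] at hq hp
    rcases h.symm.diff_dist_adj (u := r) with hd | hd | hd <;> omega

/-- In a tree the parent of `v` is the penultimate vertex of the geodesic from `r` to `v`. -/
lemma IsTree.eq_of_mem_childSet (hG : G.IsTree) {u' : V} (hu : v ∈ G.childSet r u)
    (hu' : v ∈ G.childSet r u') : u = u' := by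
  obtain ⟨q, hq, -⟩ := hG.connected.exists_path_of_dist r v
  suffices key : ∀ u, v ∈ G.childSet r u → u = q.penultimate from
    (key u hu).trans (key u' hu').symm
  rintro u ⟨huv, hdist⟩
  obtain ⟨p, hp, hpl⟩ := hG.connected.exists_path_of_dist r u
  have hvp : v ∉ p.support := fun hv => by
    have := p.dist_le_length_of_mem_support hv
    omega
  exact hG.isAcyclic.eq_penultimate_of_adj_end hq huv.symm
    (hG.isAcyclic.mem_support_of_ne_mem_support_of_adj_of_isPath hq hp huv.symm hvp)

lemma IsTree.infinite_childSet (hG : G.IsTree) (r : V) (hv : (G.neighborSet v).Infinite) :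
    (G.childSet r v).Infinite := by
  have hparent : {u | v ∈ G.childSet r u}.Subsingleton := fun _ hu _ hu' =>
    hG.eq_of_mem_childSet hu hu'
  refine (hv.sdiff hparent.finite).mono ?_
  rintro u ⟨huv, hu⟩
  rcases hG.dist_eq_dist_add_one_of_adj r huv with hd | hd
  · exact (hu ⟨huv.symm, hd⟩).elim
  · exact ⟨huv, hd⟩

section descend

variable (r) (c : ∀ v, α ≃ G.childSet r v)

/-- The vertex reached from `r` by following the child labels of `w`; the head of `w` labels the
last step. -/
def descend : List α → V
  | [] => r
  | a :: w => c (descend w) a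

lemma descend_cons_mem_childSet (a : α) (w : List α) :
    descend r c (a :: w) ∈ G.childSet r (descend r c w) :=
  (c _ a).2

lemma dist_descend (w : List α) : G.dist r (descend r c w) = w.length := by
  induction w with
  | nil => exact dist_self
  | cons a w ih => rw [(descend_cons_mem_childSet r c a w).2, ih, List.length_cons]

lemma IsTree.descend_injective (hG : G.IsTree) : Function.Injective (descend r c) := by
  intro s t hst
  have hlen : s.length = t.length := by rw [← dist_descend r c, hst, dist_descend]
  induction s generalizing t with
  | nil => exact (List.eq_nil_of_length_eq_zero hlen.symm).symm
  | cons a s ih =>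
    obtain _ | ⟨b, t⟩ := t
    · cases hlen
    have hparent : descend r c s = descend r c t :=
      hG.eq_of_mem_childSet (descend_cons_mem_childSet r c a s)
        (hst ▸ descend_cons_mem_childSet r c b t)
    obtain rfl := ih hparent (Nat.succ_injective hlen)
    rw [(c _).injective (Subtype.ext hst)]

lemma Connected.descend_surjective (hG : G.Connected) : Function.Surjective (descend r c) := by
  intro v
  induction hd : G.dist r v using Nat.strong_induction_on generalizing v with
  | _ n ih =>
    by_cases hv : v = r
    · exact ⟨[], hv.symm⟩
    obtain ⟨u, hu⟩ := hG.exists_mem_childSet hv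
    obtain ⟨w, rfl⟩ := ih _ (by rw [← hd, hu.2]; omega) u rfl
    exact ⟨(c _).symm ⟨v, hu⟩ :: w, by simp [descend]⟩

lemma IsTree.exists_eq_cons_of_mem_childSet (hG : G.IsTree) {s t : List α}
    (h : descend r c t ∈ G.childSet r (descend r c s)) : ∃ a, t = a :: s :=
  ⟨(c _).symm ⟨_, h⟩, hG.descend_injective r c (by simp [descend])⟩

lemma IsTree.adj_descend_iff (hG : G.IsTree) {s t : List α} :
    G.Adj (descend r c s) (descend r c t) ↔ (listTree α).Adj s t := by
  rw [listTree, fromRel_adj]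
  constructor
  · intro h
    refine ⟨fun hst => h.ne (congrArg _ hst), ?_⟩
    rcases hG.dist_eq_dist_add_one_of_adj r h with hd | hd
    · exact Or.inr (hG.exists_eq_cons_of_mem_childSet r c ⟨h.symm, hd⟩)
    · exact Or.inl (hG.exists_eq_cons_of_mem_childSet r c ⟨h, hd⟩)
  · rintro ⟨-, ⟨a, rfl⟩ | ⟨a, rfl⟩⟩
    · exact (descend_cons_mem_childSet r c a s).1
    · exact (descend_cons_mem_childSet r c a t).1.symm

end descend

lemma IsTree.exists_iso_listTree (hG : G.IsTree) (r : V)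
    (hc : ∀ v, Nonempty (α ≃ G.childSet r v)) : ∃ f : listTree α ≃g G, f [] = r := by
  let c v := (hc v).some
  have hbij : Function.Bijective (descend r c) :=
    ⟨hG.descend_injective r c, hG.connected.descend_surjective r c⟩
  exact ⟨⟨.ofBijective _ hbij, hG.adj_descend_iff r c⟩, rfl⟩

end SimpleGraph

/-- The automorphism group of a connected acyclic simple graph all of whose vertices
have countably infinite degree acts transitively on the vertices. -/
theorem tree_aut_vertex_transitive {V : Type*} (G : SimpleGraph V)
    (hconn : G.Connected) (hacyc : G.IsAcyclic)
    (hdeg : ∀ v : V, Countable (G.neighborSet v) ∧ Infinite (G.neighborSet v))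
    (a b : V) :
    ∃ f : G ≃g G, f a = b := by
  have hG : G.IsTree := ⟨hconn, hacyc⟩
  have hc (r v : V) : Nonempty (ℕ ≃ G.childSet r v) := by
    have : Countable (G.childSet r v) :=
      ((Set.countable_coe_iff.mp (hdeg v).1).mono fun _ hu => hu.1).to_subtype
    have : Infinite (G.childSet r v) :=
      (hG.infinite_childSet r (Set.infinite_coe_iff.mp (hdeg v).2)).to_subtype
    exact nonempty_equiv_of_countable
  obtain ⟨fa, hfa⟩ := hG.exists_iso_listTree a (hc a)
  obtain ⟨fb, hfb⟩ := hG.exists_iso_listTree b (hc b)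
  exact ⟨fa.symm.trans fb, by rw [RelIso.trans_apply, ← hfa, fa.symm_apply_apply, hfb]⟩
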